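/- arXiv:0904.3086 — 3 statements merged into one kernel-verified Lean document; each statement's English description precedes it below -/
import Mathlib

section
/- Let n ≥ 2 and 1 ≤ l ≤ m ≤ n/2. For each l-element subset i of {1,...,n}, define the function η_i on m-element subsets of {1,...,n} by η_i(k) = 1 if i ⊆ k and η_i(k) = 0 otherwise. Then the family {η_i : i an l-subset of {1,...,n}} is linearly independent in the space of complex-valued functions on m-subsets of {1,...,n}. -/
open Finset

/-- `V^{(n-m,m)}`: the `m`-element subsets of `{1,...,n}`. -/
abbrev VSet (n m : ℕ) : Type := {s : Finset (Fin n) // s.card = m}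

/-- Pointwise action of a permutation on an `m`-subset. -/
def permSub {n m : ℕ} (x : Equiv.Perm (Fin n)) (k : VSet n m) : VSet n m :=
  ⟨k.1.image x, by rw [Finset.card_image_of_injective _ x.injective]; exact k.2⟩

/-- Action of `S_n` on functions on `m`-subsets: `(x·f)(k) = f(x⁻¹·k)`. -/
def permAct {n m : ℕ} (x : Equiv.Perm (Fin n)) (f : VSet n m → ℂ) : VSet n m → ℂ :=
  fun k => f (permSub x⁻¹ k)

/-- Indicator function `𝟙_j` of an `m`-subset `j`. -/
def indic {n m : ℕ} (j : VSet n m) : VSet n m → ℂ := fun k => if k = j then 1 else 0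

/-- The subset `{1,...,m}` of `{1,...,n}` (as the first `m` elements of `Fin n`). -/
def firstSet (n m : ℕ) (h : m ≤ n) : VSet n m :=
  ⟨(Finset.range m).attachFin (fun a ha => lt_of_lt_of_le (Finset.mem_range.mp ha) h),
   by rw [Finset.card_attachFin, Finset.card_range]⟩

/-- Expectation of `g(X)` for a uniformly random permutation `X` of `{1,...,n}`. -/
noncomputable def Eperm (n : ℕ) (g : Equiv.Perm (Fin n) → ℂ) : ℂ :=
  (∑ x : Equiv.Perm (Fin n), g x) / (Nat.factorial n : ℂ)

/-- `η_i(k) = 1` if the `l`-subset `i` is contained in the `m`-subset `k`, else `0`. -/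
def eta {n : ℕ} (l m : ℕ) (i : VSet n l) : VSet n m → ℂ :=
  fun k => if i.1 ⊆ k.1 then 1 else 0

/-!
The up operator `U f t = ∑_{y ∈ t} f (t \ {y})` and the down operator
`D f s = ∑_{x ∉ s} f (s ∪ {x})` are adjoint for the pairing of functions on `j`-sets with
functions on `(j+1)`-sets, and `D U - U D = n - 2j` on `j`-sets. Hence
`‖U f‖² = ‖D f‖² + (n - 2j) ‖f‖²`, so `U` is injective on `j`-sets when `2j < n`.
For a combination `g = ∑ c_i η_i`, extended to all subsets, `U g t = (|t| - l) g t`; so if `g`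
vanishes on `m`-sets it vanishes on `(m-1)`-sets, and so on down to `l`-sets, where `g i = c_i`.
-/

section UpDown

variable {α M : Type*} [DecidableEq α] [AddCommMonoid M]

def upOp (f : Finset α → M) (t : Finset α) : M := ∑ y ∈ t, f (t.erase y)

theorem upOp_sum_powersetCard (C : Finset α → M) (l : ℕ) (t : Finset α) :
    upOp (fun s => ∑ i ∈ s.powersetCard l, C i) t = (#t - l) • ∑ i ∈ t.powersetCard l, C i := by
  rw [upOp, smul_sum]
  -- an `l`-subset `i ⊆ t` is counted once for each `y ∈ t \ i`
  rw [sum_comm' (t' := t.powersetCard l) (s' := fun i => t \ i)]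
  · refine sum_congr rfl fun i hi => ?_
    rw [mem_powersetCard] at hi
    rw [sum_const, card_sdiff_of_subset hi.1, hi.2]
  · intro y i
    simp only [mem_powersetCard, subset_erase, mem_sdiff]
    tauto

variable [Fintype α]

def downOp (f : Finset α → M) (s : Finset α) : M := ∑ x ∈ sᶜ, f (insert x s)

theorem map_downOp {N F : Type*} [AddCommMonoid N] [FunLike F M N] [AddMonoidHomClass F M N]
    (φ : F) (f : Finset α → M) (s : Finset α) : φ (downOp f s) = downOp (φ ∘ f) s :=
  map_sum φ _ _

theorem sum_upOp_mul {R : Type*} [NonUnitalNonAssocSemiring R] (j : ℕ) (f g : Finset α → R) :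
    ∑ t ∈ powersetCard (j + 1) univ, upOp f t * g t
      = ∑ s ∈ powersetCard j univ, f s * downOp g s := by
  simp only [upOp, downOp, sum_mul, mul_sum]
  rw [sum_sigma' (powersetCard (j + 1) univ) (fun t => t),
    sum_sigma' (powersetCard j univ) compl]
  -- both sides sum over pairs `(s, x)` with `x ∉ s` and `#s = j`; on the left `t = insert x s`
  refine sum_nbij' (fun p => ⟨p.1.erase p.2, p.2⟩) (fun p => ⟨insert p.2 p.1, p.2⟩) ?_ ?_ ?_ ?_ ?_
  · rintro ⟨t, y⟩ hp
    simp only [mem_sigma, mem_powersetCard_univ] at hp ⊢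
    simp [card_erase_of_mem hp.2, hp.1]
  · rintro ⟨s, x⟩ hp
    simp only [mem_sigma, mem_powersetCard_univ, mem_compl] at hp ⊢
    simp [card_insert_of_notMem hp.2, hp.1]
  · rintro ⟨t, y⟩ hp
    simp only [mem_sigma] at hp
    simp [insert_erase hp.2]
  · rintro ⟨s, x⟩ hp
    simp only [mem_sigma, mem_compl] at hp
    simp [erase_insert hp.2]
  · rintro ⟨t, y⟩ hp
    simp only [mem_sigma] at hp
    simp [insert_erase hp.2]

theorem downOp_upOp_add (f : Finset α → M) (s : Finset α) :
    downOp (upOp f) s + #s • f s = upOp (downOp f) s + #sᶜ • f s := by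
  have hdown : ∀ x ∈ sᶜ, upOp f (insert x s) = f s + ∑ y ∈ s, f (insert x (s.erase y)) := by
    intro x hx
    rw [mem_compl] at hx
    rw [upOp, sum_insert hx, erase_insert hx]
    congr 1
    refine sum_congr rfl fun y hy => ?_
    rw [erase_insert_of_ne (by rintro rfl; exact hx hy)]
  have hup : ∀ y ∈ s, downOp f (s.erase y) = f s + ∑ x ∈ sᶜ, f (insert x (s.erase y)) := by
    intro y hy
    have : (s.erase y)ᶜ = insert y sᶜ := by ext; simp [or_iff_not_imp_left]
    rw [downOp, this, sum_insert (by simp [hy]), insert_erase hy]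
  rw [downOp, upOp, sum_congr rfl hdown, sum_congr rfl hup, sum_add_distrib, sum_add_distrib,
    sum_const, sum_const, sum_comm]
  abel

end UpDown

section Injectivity

open scoped ComplexOrder

variable {α 𝕜 : Type*} [Fintype α] [DecidableEq α] [RCLike 𝕜]

theorem sum_star_mul_upOp_downOp_nonneg (f : Finset α → 𝕜) (j : ℕ) :
    0 ≤ ∑ s ∈ powersetCard j univ, star (f s) * upOp (downOp f) s := by
  cases j with
  | zero => simp [upOp]
  | succ j =>
    simp_rw [mul_comm (star _)]
    rw [sum_upOp_mul]
    refine sum_nonneg fun r _ => ?_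
    rw [show downOp (fun s => star (f s)) r = star (downOp f r) from
      (map_downOp (starRingEnd 𝕜) f r).symm]
    exact mul_star_self_nonneg _

theorem eq_zero_of_upOp_eq_zero {j : ℕ} (hj : 2 * j < Fintype.card α) {f : Finset α → 𝕜}
    (hf : ∀ t : Finset α, #t = j + 1 → upOp f t = 0) {s : Finset α} (hs : #s = j) :
    f s = 0 := by
  set A := ∑ s ∈ powersetCard j univ, star (f s) * upOp (downOp f) s
  set B := ∑ s ∈ powersetCard j univ, star (f s) * f s
  have hB : 0 ≤ B := sum_nonneg fun s _ => star_mul_self_nonneg (f s)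
  -- `‖U f‖² = ⟪f, D U f⟫ = ⟪f, U D f⟫ + (n - 2j) ‖f‖² = ‖D f‖² + (n - 2j) ‖f‖²`
  have hUf : ∑ s ∈ powersetCard j univ, star (f s) * downOp (upOp f) s = 0 := by
    simp_rw [← starRingEnd_apply, ← Function.comp_apply (f := starRingEnd 𝕜)]
    rw [← sum_upOp_mul]
    exact sum_eq_zero fun t ht => by rw [hf t (mem_powersetCard_univ.mp ht), mul_zero]
  have hcomm : ∑ s ∈ powersetCard j univ, star (f s) * downOp (upOp f) s + j • B
      = A + (Fintype.card α - j) • B := by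
    simp only [A, B, smul_sum, ← sum_add_distrib]
    refine sum_congr rfl fun s hs => ?_
    have hs_comm := congrArg (star (f s) * ·) (downOp_upOp_add f s)
    rw [card_compl, mem_powersetCard_univ.mp hs] at hs_comm
    simpa only [mul_add, mul_smul_comm] using hs_comm
  rw [hUf, zero_add, show Fintype.card α - j = (Fintype.card α - 2 * j) + j by omega,
    add_smul, ← add_assoc] at hcomm
  have hnB : (Fintype.card α - 2 * j) • B = 0 :=
    ((add_eq_zero_iff_of_nonneg (sum_star_mul_upOp_downOp_nonneg f j)
      (nsmul_nonneg hB _)).mp (add_eq_right.mp hcomm.symm)).2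
  have hB0 : B = 0 := (smul_eq_zero.mp hnB).resolve_left (by omega)
  have hfs := (sum_eq_zero_iff_of_nonneg fun s _ => star_mul_self_nonneg (f s)).mp hB0 s
    (mem_powersetCard_univ.mpr hs)
  exact (CStarRing.star_mul_self_eq_zero_iff _).mp hfs

end Injectivity

section Inclusion

variable {α 𝕜 : Type*} [Fintype α] [DecidableEq α] [RCLike 𝕜]

theorem eq_zero_of_sum_powersetCard_eq_zero {l m : ℕ} (hlm : l ≤ m)
    (hm : 2 * m ≤ Fintype.card α) {C : Finset α → 𝕜}
    (hC : ∀ k : Finset α, #k = m → ∑ i ∈ k.powersetCard l, C i = 0)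
    {i : Finset α} (hi : #i = l) : C i = 0 := by
  induction m, hlm using Nat.le_induction with
  | base => simpa [← hi] using hC i hi
  | succ m _ ih =>
    refine ih (by omega) fun k hk =>
      eq_zero_of_upOp_eq_zero (f := fun s => ∑ i ∈ s.powersetCard l, C i) (by omega)
        (fun t ht => ?_) hk
    rw [upOp_sum_powersetCard, hC t ht, smul_zero]

theorem linearIndependent_subset_indicator {l m : ℕ} (hlm : l ≤ m)
    (hm : 2 * m ≤ Fintype.card α) :
    LinearIndependent 𝕜 fun (i : {s : Finset α // #s = l}) (k : {s : Finset α // #s = m}) =>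
      if i.1 ⊆ k.1 then (1 : 𝕜) else 0 := by
  rw [Fintype.linearIndependent_iff]
  intro c hc i
  let C : Finset α → 𝕜 := fun s => if h : #s = l then c ⟨s, h⟩ else 0
  suffices C i.1 = c i by
    rw [← this]
    refine eq_zero_of_sum_powersetCard_eq_zero hlm hm (fun k hk => ?_) i.2
    have hck : ∑ j : {s : Finset α // #s = l}, (if j.1 ⊆ k then c j else 0) = 0 := by
      simpa using congrFun hc ⟨k, hk⟩
    calc ∑ i ∈ k.powersetCard l, C i
        = ∑ s ∈ powersetCard l univ, if s ⊆ k then C s else 0 := by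
          rw [← sum_filter]
          congr 1
          ext
          simp [mem_powersetCard, and_comm]
      _ = ∑ j : {s : Finset α // #s = l}, if j.1 ⊆ k then c j else 0 :=
          (sum_subtype _ (fun _ => mem_powersetCard_univ) _).trans
            (sum_congr rfl fun j _ => by simp [C, j.2])
      _ = 0 := hck
  simp [C, i.2]

end Inclusion

theorem eta_linearIndependent_general (n l m : ℕ) (hlm : l ≤ m) (hm : 2 * m ≤ n) :
    LinearIndependent ℂ (fun i : VSet n l => eta l m i) :=
  linearIndependent_subset_indicator hlm (by simpa using hm)

/-- The family `{η_i : i an l-subset of {1,...,n}}` is linearly independent in the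
space of complex-valued functions on `m`-subsets of `{1,...,n}`. -/
theorem eta_linearIndependent (n l m : ℕ) (hn : 2 ≤ n) (hl : 1 ≤ l) (hlm : l ≤ m)
    (hm : 2 * m ≤ n) :
    LinearIndependent ℂ (fun i : VSet n l => eta l m i) :=
  eta_linearIndependent_general n l m hlm hm
end

section
/- Let n ≥ 2 and 1 ≤ l < l' ≤ m ≤ n/2. Let φ be a function on l-element subsets of {1,...,n} and ψ a function on l'-element subsets, each completely degenerate (i.e., for every subset j of size l-1, ∑_{a ∉ j} φ(j ∪ {a}) = 0, and similarly for ψ with subsets of size l'-1). Define f(k) = ∑_{i ⊆ k, |i|=l} φ(i) and h(k) = ∑_{i ⊆ k, |i|=l'} ψ(i) on m-subsets k. Then, with X a uniform random permutation and X_{(m)} = {X(1),...,X(m)}, one has E[f(X_{(m)}) · conj(h(X_{(m)}))] = 0; equivalently, C(n,m)^{-1} ∑_{k} f(k) conj(h(k)) = 0, summing over all m-subsets k of {1,...,n}. -/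
/-!
Expanding both U-statistics, `∑ₖ f(k) h̄(k) = ∑_{i,i'} N(i ∪ i') φ(i) ψ̄(i')`, where `N(u)` is the
number of `m`-sets containing `u`; it depends only on `#u = l + l' - #(i ∩ i')`. Complete
degeneracy of `ψ` makes it sum to zero over the `l'`-supersets of any set of size `< l'`: if
`S(j)` is that sum, then `∑_{a ∉ j} S(j ∪ {a}) = (l' - #j) S(j)`, so downward induction on `#j`
applies. A second downward induction, over `t ⊆ i`, shows that `ψ` also sums to zero over each
fibre `{i' | i ∩ i' = t}` as long as `#i = l < l'`, which kills the inner sum. The expectation over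
a uniform permutation is a multiple of the same sum, since `Sₙ` acts transitively on `m`-sets.
-/

open Finset

/-- Complete degeneracy of a symmetric kernel `φ` of order `l`: for every
`(l-1)`-subset `j` of `{1,...,n}`, `∑_{a ∉ j} φ(j ∪ {a}) = 0`. -/
def degenKer (n l : ℕ) (φ : Finset (Fin n) → ℂ) : Prop :=
  ∀ j : Finset (Fin n), j.card = l - 1 → ∑ a ∈ jᶜ, φ (insert a j) = 0

open scoped Pointwise

variable {α M : Type*} [DecidableEq α]

theorem exists_perm_smul_eq {s t : Finset α} (h : #s = #t) : ∃ σ : Equiv.Perm α, σ • s = t := by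
  have := Set.powersetCard.isPretransitive (α := α) (n := #s)
  obtain ⟨σ, hσ⟩ := MulAction.exists_smul_eq (Equiv.Perm α)
    (⟨s, Set.powersetCard.mem_iff.2 rfl⟩ : Set.powersetCard α #s)
    ⟨t, Set.powersetCard.mem_iff.2 h.symm⟩
  exact ⟨σ, congrArg Subtype.val hσ⟩

variable [Fintype α]

/-- `degenKer` for kernels on an arbitrary finite type, with values in any additive monoid. -/
def IsCompletelyDegenerate [AddCommMonoid M] (l : ℕ) (ψ : Finset α → M) : Prop :=
  ∀ j : Finset α, #j = l - 1 → ∑ a ∈ jᶜ, ψ (insert a j) = 0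

def uStatistic [AddCommMonoid M] (l : ℕ) (φ : Finset α → M) (k : Finset α) : M :=
  ∑ i ∈ k.powersetCard l, φ i

theorem IsCompletelyDegenerate.map {N F : Type*} [AddCommMonoid M] [AddCommMonoid N]
    [FunLike F M N] [AddMonoidHomClass F M N] (f : F) {l : ℕ} {ψ : Finset α → M}
    (hψ : IsCompletelyDegenerate l ψ) : IsCompletelyDegenerate l (f ∘ ψ) := fun j hj => by
  simp only [Function.comp_apply, ← map_sum, hψ j hj, map_zero]

theorem filter_powersetCard_univ_superset_of_card_eq {l : ℕ} {s : Finset α} (hs : #s = l) :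
    {i ∈ powersetCard l (univ : Finset α) | s ⊆ i} = {s} := by
  ext i
  simp only [mem_filter, mem_powersetCard_univ, mem_singleton]
  constructor
  · rintro ⟨hi, hsi⟩
    exact (eq_of_subset_of_card_le hsi (by omega)).symm
  · rintro rfl
    exact ⟨hs, subset_rfl⟩

theorem card_filter_powersetCard_univ_subset (m : ℕ) (s : Finset α) :
    #{k ∈ powersetCard m (univ : Finset α) | s ⊆ k} =
      if #s ≤ m then (Fintype.card α - #s).choose (m - #s) else 0 := by
  split_ifs with hsm
  · rw [card_filter_powersetCard_subset s univ m (subset_univ s) hsm, card_univ]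
  · rw [card_eq_zero, filter_eq_empty_iff]
    exact fun k hk hsk => hsm ((card_le_card hsk).trans (mem_powersetCard_univ.1 hk).le)

theorem powersetCard_eq_filter_subset (l : ℕ) (k : Finset α) :
    k.powersetCard l = {i ∈ powersetCard l (univ : Finset α) | i ⊆ k} := by
  ext i
  simp [mem_powersetCard, and_comm]

section AddCommMonoid

variable [AddCommMonoid M]

theorem sum_perm_image_eq_card_smul_sum (s : Finset α) (F : Finset α → M) :
    ∑ σ : Equiv.Perm α, F (s.image σ) =
      #{σ : Equiv.Perm α | σ • s = s} • ∑ k ∈ powersetCard #s univ, F k := by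
  change ∑ σ : Equiv.Perm α, F (σ • s) = _
  have himage : univ.image (fun σ : Equiv.Perm α => σ • s) = powersetCard #s univ := by
    ext t
    simp only [mem_image, mem_univ, true_and, mem_powersetCard_univ]
    exact ⟨fun ⟨σ, hσ⟩ => hσ ▸ card_smul_finset σ s, fun h => exists_perm_smul_eq h.symm⟩
  rw [sum_comp, himage, smul_sum]
  refine sum_congr rfl fun t ht => ?_
  obtain ⟨τ, rfl⟩ := exists_perm_smul_eq (mem_powersetCard_univ.1 ht).symm
  congr 1
  refine card_equiv (Equiv.mulLeft τ⁻¹) fun σ => ?_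
  simp [mul_smul, inv_smul_eq_iff]

theorem sum_powersetCard_sum_powersetCard (m l l' : ℕ) (g : Finset α → Finset α → M) :
    ∑ k ∈ powersetCard m univ, ∑ i ∈ k.powersetCard l, ∑ i' ∈ k.powersetCard l', g i i' =
      ∑ i ∈ powersetCard l univ, ∑ i' ∈ powersetCard l' univ,
        #{k ∈ powersetCard m univ | i ∪ i' ⊆ k} • g i i' := by
  calc _ = ∑ k ∈ powersetCard m univ, ∑ i ∈ powersetCard l univ, ∑ i' ∈ powersetCard l' univ,
          if i ∪ i' ⊆ k then g i i' else 0 := by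
        refine sum_congr rfl fun k _ => ?_
        simp only [powersetCard_eq_filter_subset _ k, sum_filter, union_subset_iff, ite_and]
        refine sum_congr rfl fun i _ => ?_
        split_ifs <;> simp
    _ = _ := by
        rw [sum_comm]
        refine sum_congr rfl fun i _ => ?_
        rw [sum_comm]
        refine sum_congr rfl fun i' _ => ?_
        rw [← sum_filter, sum_const]

theorem sum_compl_sum_supersets_insert (ψ : Finset α → M) (l : ℕ) (j : Finset α) :
    ∑ a ∈ jᶜ, ∑ i ∈ powersetCard l univ with insert a j ⊆ i, ψ i =
      (l - #j) • ∑ i ∈ powersetCard l univ with j ⊆ i, ψ i := by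
  simp_rw [sum_filter]
  rw [sum_comm, smul_sum]
  refine sum_congr rfl fun i hi => ?_
  rw [← sum_filter, sum_const, ← (mem_powersetCard_univ.1 hi)]
  split_ifs with hji
  · rw [← card_sdiff_of_subset hji]
    congr 2
    ext a
    simp [insert_subset_iff, hji, and_comm]
  · rw [smul_zero, filter_false_of_mem fun a _ h => hji ((subset_insert a j).trans h),
      card_empty, zero_smul]

variable [IsAddTorsionFree M] {l : ℕ} {ψ : Finset α → M}

theorem IsCompletelyDegenerate.sum_supersets_eq_zero (hψ : IsCompletelyDegenerate l ψ)
    {j : Finset α} (hj : #j < l) : ∑ i ∈ powersetCard l univ with j ⊆ i, ψ i = 0 := by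
  suffices ∀ j : Finset α, #j ≤ l - 1 → ∑ i ∈ powersetCard l univ with j ⊆ i, ψ i = 0 from
    this j (by omega)
  refine Finset.strongDownwardInduction fun j ih hjl => ?_
  suffices ∑ a ∈ jᶜ, ∑ i ∈ powersetCard l univ with insert a j ⊆ i, ψ i = 0 by
    rwa [sum_compl_sum_supersets_insert, nsmul_eq_zero_iff_right (by omega)] at this
  by_cases hjl' : #j + 1 = l
  · rw [← hψ j (by omega)]
    refine sum_congr rfl fun a ha => ?_
    rw [filter_powersetCard_univ_superset_of_card_eq
      (by rw [card_insert_of_notMem (mem_compl.1 ha), hjl']), sum_singleton]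
  · refine sum_eq_zero fun a ha => ih ?_ (ssubset_insert (mem_compl.1 ha))
    rw [card_insert_of_notMem (mem_compl.1 ha)]
    omega

theorem IsCompletelyDegenerate.sum_inter_eq_eq_zero (hψ : IsCompletelyDegenerate l ψ)
    {s : Finset α} (hs : #s < l) (t : Finset α) :
    ∑ i ∈ powersetCard l univ with s ∩ i = t, ψ i = 0 := by
  by_cases hts : t ⊆ s
  swap
  · exact sum_eq_zero fun i hi => absurd ((mem_filter.1 hi).2 ▸ inter_subset_left) hts
  suffices ∀ t : Finset α, #t ≤ #s → t ⊆ s →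
      ∑ i ∈ powersetCard l univ with s ∩ i = t, ψ i = 0 from this t (card_le_card hts) hts
  refine Finset.strongDownwardInduction fun t ih _ hts => ?_
  have hfibers : ∑ i ∈ powersetCard l univ with t ⊆ i, ψ i =
      ∑ u ∈ s.powerset with t ⊆ u, ∑ i ∈ powersetCard l univ with s ∩ i = u, ψ i := by
    rw [← sum_fiberwise_of_maps_to (g := (s ∩ ·)) (t := {u ∈ s.powerset | t ⊆ u})]
    · refine sum_congr rfl fun u hu => ?_
      rw [filter_filter]
      refine sum_congr (filter_congr fun i _ => ?_) fun _ _ => rfl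
      exact ⟨fun h => h.2, fun h => ⟨(mem_filter.1 hu).2.trans (h ▸ inter_subset_right), h⟩⟩
    · intro i hi
      simp only [mem_filter, mem_powerset] at hi ⊢
      exact ⟨inter_subset_left, subset_inter hts hi.2⟩
  calc ∑ i ∈ powersetCard l univ with s ∩ i = t, ψ i
      = ∑ u ∈ s.powerset with t ⊆ u, ∑ i ∈ powersetCard l univ with s ∩ i = u, ψ i := by
        symm
        refine sum_eq_single_of_mem t (by simp [hts]) fun u hu hut => ?_
        simp only [mem_filter, mem_powerset] at hu
        exact ih (card_le_card hu.1) (ssubset_of_subset_of_ne hu.2 (Ne.symm hut)) hu.1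
    _ = 0 := by rw [← hfibers, hψ.sum_supersets_eq_zero ((card_le_card hts).trans_lt hs)]

theorem IsCompletelyDegenerate.sum_smul_inter_eq_zero (hψ : IsCompletelyDegenerate l ψ)
    {s : Finset α} (hs : #s < l) (w : Finset α → ℕ) :
    ∑ i ∈ powersetCard l univ, w (s ∩ i) • ψ i = 0 := by
  rw [← sum_fiberwise_of_maps_to (g := (s ∩ ·)) (t := s.powerset)
    fun i _ => mem_powerset.2 inter_subset_left]
  refine sum_eq_zero fun t _ => ?_
  rw [sum_congr rfl fun i hi => by rw [(mem_filter.1 hi).2], ← smul_sum,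
    hψ.sum_inter_eq_eq_zero hs t, smul_zero]

end AddCommMonoid

theorem IsCompletelyDegenerate.sum_uStatistic_mul_eq_zero {R : Type*} [Semiring R]
    [IsAddTorsionFree R] {l l' : ℕ} (φ : Finset α → R) {ψ : Finset α → R}
    (hψ : IsCompletelyDegenerate l' ψ) (hll' : l < l') (m : ℕ) :
    ∑ k ∈ powersetCard m univ, uStatistic l φ k * uStatistic l' ψ k = 0 := by
  simp_rw [uStatistic, sum_mul_sum, sum_powersetCard_sum_powersetCard, ← mul_smul_comm,
    ← mul_sum]
  refine sum_eq_zero fun i hi => ?_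
  rw [mem_powersetCard_univ] at hi
  obtain ⟨w, hw⟩ : ∃ w : Finset α → ℕ, ∀ i' ∈ powersetCard l' (univ : Finset α),
      #{k ∈ powersetCard m univ | i ∪ i' ⊆ k} = w (i ∩ i') :=
    ⟨fun t => if l + l' - #t ≤ m then (Fintype.card α - (l + l' - #t)).choose (m - (l + l' - #t))
      else 0, fun i' hi' => by
        rw [card_filter_powersetCard_univ_subset, card_union, hi, mem_powersetCard_univ.1 hi']⟩
  rw [sum_congr rfl fun i' hi' => by rw [hw i' hi'], hψ.sum_smul_inter_eq_zero (hi ▸ hll'),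
    mul_zero]

/-- Symmetric `U`-statistics with completely degenerate kernels of different orders
`l < l'` are orthogonal: `E[f(X_{(m)}) conj(h(X_{(m)}))] = 0`, equivalently
`C(n,m)⁻¹ ∑_k f(k) conj(h(k)) = 0` over all `m`-subsets `k`. -/
theorem degenerate_U_statistics_orthogonal (n m l l' : ℕ)
    (hll' : l < l') (hm : 2 * m ≤ n)
    (φ ψ : Finset (Fin n) → ℂ) (hψ : degenKer n l' ψ) :
    Eperm n (fun x =>
        (∑ i ∈ ((firstSet n m (by omega)).1.image x).powersetCard l, φ i) *
          (starRingEnd ℂ)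
            (∑ i ∈ ((firstSet n m (by omega)).1.image x).powersetCard l', ψ i)) = 0 ∧
    (Nat.choose n m : ℂ)⁻¹ *
        ∑ k ∈ (Finset.univ : Finset (Fin n)).powersetCard m,
          (∑ i ∈ k.powersetCard l, φ i) *
            (starRingEnd ℂ) (∑ i ∈ k.powersetCard l', ψ i) = 0 := by
  set F : Finset (Fin n) → ℂ := fun k => (∑ i ∈ k.powersetCard l, φ i) *
    (starRingEnd ℂ) (∑ i ∈ k.powersetCard l', ψ i)
  have hsum : ∑ k ∈ powersetCard m univ, F k = 0 := by
    simpa only [F, uStatistic, map_sum, Function.comp_apply] using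
      (IsCompletelyDegenerate.map (starRingEnd ℂ) hψ).sum_uStatistic_mul_eq_zero φ hll' m
  refine ⟨?_, by rw [hsum, mul_zero]⟩
  rw [Eperm, sum_perm_image_eq_card_smul_sum _ F, (firstSet n m _).2, hsum, smul_zero, zero_div]
end

section
/- Let n ≥ 2 and 1 ≤ l ≤ m ≤ n/2. The dimension of the l-th symmetric Hoeffding space W_l — the space of functions on m-subsets of {1,...,n} of the form f(k) = ∑_{i ⊆ k, |i|=l} φ(i) with φ completely degenerate of order l — equals C(n,l) - C(n,l-1). -/
open Finset

/-!
Let `U f s = ∑_{b ∈ s} f (s \ {b})` be the up operator on functions on subsets of an `n`-set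
and `D` its adjoint, the down operator; `φ` is completely degenerate of order `l` iff `D φ`
vanishes on `(l-1)`-sets. On level `k` one has `D U - U D = n - 2k`, so
`‖U f‖² = ‖D f‖² + (n - 2k) ‖f‖²`: `U` is injective below the middle level, and `ker D` meets
`range U` only in `0`. Rank–nullity then gives `dim (ker D on level l) = C(n,l) - C(n,l-1)`.

It remains to see that `φ ↦ (k ↦ ∑_{i ⊆ k, |i| = l} φ i)` is injective on level `l` for
`l ≤ m ≤ n/2`. The function `g t = ∑_{i ⊆ t, |i| = l} φ i` satisfies `U g = (|t| - l) g`, so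
if `g` vanishes on `(k+1)`-sets then `U` kills the restriction of `g` to `k`-sets, which
therefore vanishes when `2k < n`; descending from `m` to `l` gives `φ = 0`.
-/

lemma finrank_ker_eq_sub_of_disjoint_range {K V W : Type*} [DivisionRing K] [AddCommGroup V]
    [Module K V] [AddCommGroup W] [Module K W] [FiniteDimensional K V] [FiniteDimensional K W]
    (U : V →ₗ[K] W) (D : W →ₗ[K] V) (hU : Function.Injective U)
    (hDU : Disjoint (LinearMap.ker D) (LinearMap.range U)) :
    Module.finrank K (LinearMap.ker D) = Module.finrank K W - Module.finrank K V := by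
  have h_rank_nullity := D.finrank_range_add_finrank_ker
  have h_range_D := Submodule.finrank_le (LinearMap.range D)
  have h_sup := Submodule.finrank_sup_add_finrank_inf_eq (LinearMap.ker D) (LinearMap.range U)
  have h_sup_le := Submodule.finrank_le (LinearMap.ker D ⊔ LinearMap.range U)
  rw [hDU.eq_bot, finrank_bot, LinearMap.finrank_range_of_inj hU] at h_sup
  omega

namespace Hoeffding

open Module Matrix LinearMap

section CommSemiring

variable {α R : Type*} [CommSemiring R]

def truncate (k : ℕ) (f : Finset α → R) (s : Finset α) : R := if #s = k then f s else 0

variable (α R) in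
def level (k : ℕ) : Submodule R (Finset α → R) where
  carrier := {f | ∀ s, #s ≠ k → f s = 0}
  add_mem' hf hg s hs := by simp [hf s hs, hg s hs]
  zero_mem' _ _ := rfl
  smul_mem' c f hf s hs := by simp [hf s hs]

lemma truncate_mem_level (k : ℕ) (f : Finset α → R) : truncate k f ∈ level α R k :=
  fun _ hs => if_neg hs

lemma truncate_eq_self {k : ℕ} {f : Finset α → R} (hf : f ∈ level α R k) :
    truncate k f = f :=
  funext fun s => by by_cases hs : #s = k <;> simp [truncate, hs, hf s]

variable (α R) in
def levelEquiv (k : ℕ) : level α R k ≃ₗ[R] ({s : Finset α // #s = k} → R) where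
  toFun f s := f.1 s.1
  map_add' _ _ := rfl
  map_smul' _ _ := rfl
  invFun ψ := ⟨fun t => if h : #t = k then ψ ⟨t, h⟩ else 0, fun _ hs => dif_neg hs⟩
  left_inv f := Subtype.ext <| funext fun t => by
    by_cases h : #t = k <;> simp [h, f.2 t]
  right_inv ψ := funext fun s => by simp [s.2]

lemma finrank_level [Fintype α] (K : Type*) [Field K] (k : ℕ) :
    finrank K (level α K k) = (Fintype.card α).choose k := by
  rw [(levelEquiv α K k).finrank_eq, finrank_fintype_fun_eq_card, Fintype.card_finset_len]

variable (R) in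
def inclusion (l : ℕ) : (Finset α → R) →ₗ[R] (Finset α → R) where
  toFun f t := ∑ i ∈ t.powersetCard l, f i
  map_add' f g := funext fun t => by simp [sum_add_distrib]
  map_smul' c f := funext fun t => by simp [mul_sum]

@[simp]
lemma inclusion_apply (l : ℕ) (f : Finset α → R) (t : Finset α) :
    inclusion R l f t = ∑ i ∈ t.powersetCard l, f i := rfl

variable [DecidableEq α]

variable (R) in
def up : (Finset α → R) →ₗ[R] (Finset α → R) where
  toFun f s := ∑ b ∈ s, f (s.erase b)
  map_add' f g := funext fun s => by simp [sum_add_distrib]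
  map_smul' c f := funext fun s => by simp [mul_sum]

@[simp]
lemma up_apply (f : Finset α → R) (s : Finset α) : up R f s = ∑ b ∈ s, f (s.erase b) := rfl

lemma up_truncate (k : ℕ) (f : Finset α → R) :
    up R (truncate k f) = truncate (k + 1) (up R f) := by
  funext s
  simp only [up_apply, truncate]
  split_ifs with hs
  · exact sum_congr rfl fun b hb => if_pos (by rw [card_erase_of_mem hb, hs]; rfl)
  · refine sum_eq_zero fun b hb => if_neg fun h => hs ?_
    rw [card_erase_of_mem hb] at h
    have := card_pos.mpr ⟨b, hb⟩
    omega

lemma up_mem_level {k : ℕ} {f : Finset α → R} (hf : f ∈ level α R k) :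
    up R f ∈ level α R (k + 1) := by
  rw [← truncate_eq_self hf, up_truncate]
  exact truncate_mem_level _ _

lemma up_star [StarRing R] (f : Finset α → R) : up R (star f) = star (up R f) := by
  funext s; simp [star_sum]

lemma up_inclusion (l : ℕ) (f : Finset α → R) (t : Finset α) :
    up R (inclusion R l f) t = (#t - l : ℕ) * inclusion R l f t := by
  have h_erase (b : α) : (t.erase b).powersetCard l = {i ∈ t.powersetCard l | b ∉ i} := by
    ext i
    simp only [mem_powersetCard, mem_filter, subset_erase]
    tauto
  calc up R (inclusion R l f) t
      = ∑ b ∈ t, ∑ i ∈ t.powersetCard l, if b ∉ i then f i else 0 := by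
        simp only [up_apply, inclusion_apply, h_erase, sum_filter]
    _ = ∑ i ∈ t.powersetCard l, ∑ b ∈ t \ i, f i := by
        rw [sum_comm]
        simp only [sdiff_eq_filter, sum_filter]
    _ = (#t - l : ℕ) * inclusion R l f t := by
        rw [inclusion_apply, mul_sum]
        refine sum_congr rfl fun i hi => ?_
        obtain ⟨hit, hi⟩ := mem_powersetCard.mp hi
        rw [sum_const, card_sdiff_of_subset hit, hi, nsmul_eq_mul]

variable [Fintype α]

variable (R) in
def down : (Finset α → R) →ₗ[R] (Finset α → R) where
  toFun f j := ∑ a ∈ jᶜ, f (insert a j)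
  map_add' f g := funext fun j => by simp [sum_add_distrib]
  map_smul' c f := funext fun j => by simp [mul_sum]

@[simp]
lemma down_apply (f : Finset α → R) (j : Finset α) :
    down R f j = ∑ a ∈ jᶜ, f (insert a j) := rfl

lemma down_truncate (k : ℕ) (f : Finset α → R) :
    down R (truncate (k + 1) f) = truncate k (down R f) := by
  funext j
  simp only [down_apply, truncate]
  split_ifs with hj
  · exact sum_congr rfl fun a ha => if_pos (by rw [card_insert_of_notMem (mem_compl.mp ha), hj])
  · exact sum_eq_zero fun a ha => if_neg (by rw [card_insert_of_notMem (mem_compl.mp ha)]; omega)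

lemma down_mem_level {k : ℕ} {f : Finset α → R} (hf : f ∈ level α R (k + 1)) :
    down R f ∈ level α R k := by
  rw [← truncate_eq_self hf, down_truncate]
  exact truncate_mem_level _ _

lemma down_star [StarRing R] (f : Finset α → R) : down R (star f) = star (down R f) := by
  funext s; simp [star_sum]

lemma up_dotProduct (f g : Finset α → R) : up R f ⬝ᵥ g = f ⬝ᵥ down R g := by
  simp only [dotProduct, up_apply, down_apply, sum_mul, mul_sum]
  rw [sum_sigma', sum_sigma']
  refine sum_nbij' (fun x => ⟨x.1.erase x.2, x.2⟩) (fun x => ⟨insert x.2 x.1, x.2⟩)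
    ?_ ?_ ?_ ?_ ?_ <;> rintro ⟨s, b⟩ h <;> simp_all [insert_erase]

lemma star_dotProduct_up [StarRing R] (f g : Finset α → R) :
    star f ⬝ᵥ up R g = star (down R f) ⬝ᵥ g := by
  rw [dotProduct_comm, up_dotProduct, dotProduct_comm, down_star]

lemma star_dotProduct_down [StarRing R] (f g : Finset α → R) :
    star f ⬝ᵥ down R g = star (up R f) ⬝ᵥ g := by
  rw [← up_dotProduct, up_star]

-- `D U - U D = n - 2 #s`, with the subtraction moved to the other side.
lemma down_up_add (f : Finset α → R) (s : Finset α) :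
    down R (up R f) s + 2 * #s * f s = up R (down R f) s + Fintype.card α * f s := by
  have h_down_up :
      down R (up R f) s = ∑ a ∈ sᶜ, (f s + ∑ b ∈ s, f (insert a (s.erase b))) := by
    refine sum_congr rfl fun a ha => ?_
    have ha' : a ∉ s := mem_compl.mp ha
    rw [up_apply, sum_insert ha', erase_insert ha']
    congr 1
    exact sum_congr rfl fun b hb => by rw [erase_insert_of_ne (ne_of_mem_of_not_mem hb ha').symm]
  have h_up_down :
      up R (down R f) s = ∑ b ∈ s, (f s + ∑ a ∈ sᶜ, f (insert a (s.erase b))) := by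
    refine sum_congr rfl fun b hb => ?_
    rw [down_apply, compl_erase, sum_insert (by simp [hb]), insert_erase hb]
  have hcard : #sᶜ + #s = Fintype.card α := by
    rw [card_compl, Nat.sub_add_cancel (card_le_univ s)]
  rw [h_down_up, h_up_down, sum_add_distrib, sum_add_distrib, sum_const, sum_const, sum_comm,
    ← hcard]
  push_cast [nsmul_eq_mul]
  ring

end CommSemiring

section RCLike

open scoped ComplexOrder

variable {α 𝕜 : Type*} [Fintype α] [DecidableEq α] [RCLike 𝕜]

lemma eq_zero_of_up_eq_zero {k : ℕ} (hk : 2 * k < Fintype.card α) {f : Finset α → 𝕜}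
    (hf : f ∈ level α 𝕜 k) (h : up 𝕜 f = 0) : f = 0 := by
  obtain ⟨c, hc⟩ := Nat.exists_eq_add_of_lt hk
  have h_comm : down 𝕜 (up 𝕜 f) = up 𝕜 (down 𝕜 f) + (c + 1) • f := by
    funext s
    have := down_up_add f s
    by_cases hs : #s = k
    · simp only [hs, hc] at this
      rw [Pi.add_apply, Pi.smul_apply, nsmul_eq_mul]
      push_cast at this ⊢
      linear_combination this
    · simpa [hf s hs] using this
  have h_norm : star (down 𝕜 f) ⬝ᵥ down 𝕜 f + (c + 1) • (star f ⬝ᵥ f) = 0 := by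
    rw [← star_dotProduct_up, ← dotProduct_smul, ← dotProduct_add, ← h_comm,
      star_dotProduct_down, h, star_zero, zero_dotProduct]
  have := (add_eq_zero_iff_of_nonneg (dotProduct_star_self_nonneg _)
    (nsmul_nonneg (dotProduct_star_self_nonneg _) _)).mp h_norm
  exact dotProduct_star_self_eq_zero.mp ((smul_eq_zero.mp this.2).resolve_left c.succ_ne_zero)

lemma up_eq_zero_of_down_up_eq_zero {g : Finset α → 𝕜} (h : down 𝕜 (up 𝕜 g) = 0) :
    up 𝕜 g = 0 := by
  rw [← dotProduct_star_self_eq_zero, star_dotProduct_up, h, star_zero, zero_dotProduct]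

variable (α 𝕜) in
def upLevel (k : ℕ) : level α 𝕜 k →ₗ[𝕜] level α 𝕜 (k + 1) :=
  (up 𝕜).restrict fun _ => up_mem_level

variable (α 𝕜) in
def downLevel (k : ℕ) : level α 𝕜 (k + 1) →ₗ[𝕜] level α 𝕜 k :=
  (down 𝕜).restrict fun _ => down_mem_level

lemma finrank_ker_downLevel {k : ℕ} (hk : 2 * k < Fintype.card α) :
    finrank 𝕜 (ker (downLevel α 𝕜 k)) =
      (Fintype.card α).choose (k + 1) - (Fintype.card α).choose k := by
  rw [finrank_ker_eq_sub_of_disjoint_range (upLevel α 𝕜 k), finrank_level, finrank_level]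
  · rw [← ker_eq_bot, ker_eq_bot']
    intro f hf
    exact Subtype.ext (eq_zero_of_up_eq_zero hk f.2 (congrArg Subtype.val hf))
  · rw [Submodule.disjoint_def]
    rintro f hf ⟨g, rfl⟩
    exact Subtype.ext (up_eq_zero_of_down_up_eq_zero (congrArg Subtype.val hf))

lemma inclusion_eq_zero_of_succ {l k : ℕ} (hk : 2 * k < Fintype.card α) {f : Finset α → 𝕜}
    (h : ∀ t : Finset α, #t = k + 1 → inclusion 𝕜 l f t = 0) (t : Finset α) (ht : #t = k) :
    inclusion 𝕜 l f t = 0 := by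
  have h_up : up 𝕜 (truncate k (inclusion 𝕜 l f)) = 0 := by
    rw [up_truncate]
    funext s
    by_cases hs : #s = k + 1
    · rw [truncate, if_pos hs, up_inclusion, h s hs, mul_zero, Pi.zero_apply]
    · exact if_neg hs
  have := congrFun (eq_zero_of_up_eq_zero hk (truncate_mem_level _ _) h_up) t
  simpa [truncate, ht] using this

lemma eq_zero_of_inclusion_eq_zero {l m : ℕ} (hlm : l ≤ m) (hm : 2 * m ≤ Fintype.card α)
    {f : Finset α → 𝕜} (hf : f ∈ level α 𝕜 l)
    (h : ∀ t : Finset α, #t = m → inclusion 𝕜 l f t = 0) : f = 0 := by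
  have h_level : ∀ t : Finset α, #t = l → inclusion 𝕜 l f t = 0 :=
    Nat.decreasingInduction
      (motive := fun k _ => ∀ t : Finset α, #t = k → inclusion 𝕜 l f t = 0)
      (fun _ hk ih => inclusion_eq_zero_of_succ (by omega) ih) h hlm
  funext t
  by_cases ht : #t = l
  · simpa [← ht] using h_level t ht
  · exact hf t ht

lemma injective_inclusion_level {l m : ℕ} (hlm : l ≤ m) (hm : 2 * m ≤ Fintype.card α) :
    Function.Injective
      (funLeft 𝕜 𝕜 (Subtype.val : {t : Finset α // #t = m} → Finset α) ∘ₗ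
        inclusion 𝕜 l ∘ₗ (level α 𝕜 l).subtype) := by
  rw [← ker_eq_bot, ker_eq_bot']
  intro f hf
  exact Subtype.ext <| eq_zero_of_inclusion_eq_zero hlm hm f.2 fun t ht => congrFun hf ⟨t, ht⟩

end RCLike

end Hoeffding

open Hoeffding LinearMap

lemma degenKer_iff_down_truncate {n k : ℕ} {φ : Finset (Fin n) → ℂ} :
    degenKer n (k + 1) φ ↔ down ℂ (truncate (k + 1) φ) = 0 := by
  rw [down_truncate, funext_iff]
  refine forall_congr' fun j => ?_
  by_cases hj : #j = k <;> simp [truncate, hj]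

theorem hoeffding_space_dim_general (n m l : ℕ) (hl : 1 ≤ l) (hlm : l ≤ m)
    (hm : 2 * m ≤ n) :
    Module.finrank ℂ
        (Submodule.span ℂ
          {f : VSet n m → ℂ | ∃ φ : Finset (Fin n) → ℂ, degenKer n l φ ∧
            ∀ k : VSet n m, f k = ∑ i ∈ k.1.powersetCard l, φ i})
      = Nat.choose n l - Nat.choose n (l - 1) := by
  obtain ⟨k, rfl⟩ := Nat.exists_eq_add_of_le' hl
  set T := funLeft ℂ ℂ (Subtype.val : VSet n m → Finset (Fin n)) ∘ₗ
    inclusion ℂ (k + 1) ∘ₗ (level (Fin n) ℂ (k + 1)).subtype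
  have hT : Function.Injective T := injective_inclusion_level hlm (by simpa using hm)
  have h_set : {f : VSet n m → ℂ | ∃ φ : Finset (Fin n) → ℂ, degenKer n (k + 1) φ ∧
      ∀ t : VSet n m, f t = ∑ i ∈ t.1.powersetCard (k + 1), φ i} =
      (ker (downLevel (Fin n) ℂ k)).map T := by
    ext f
    constructor
    · rintro ⟨φ, hφ, hf⟩
      refine ⟨⟨truncate (k + 1) φ, truncate_mem_level _ _⟩,
        Subtype.ext (degenKer_iff_down_truncate.mp hφ), funext fun t => ?_⟩
      rw [hf t]
      exact sum_congr rfl fun i hi => if_pos (mem_powersetCard.mp hi).2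
    · rintro ⟨g, hg, rfl⟩
      refine ⟨g.1, degenKer_iff_down_truncate.mpr ?_, fun t => rfl⟩
      rw [truncate_eq_self g.2]
      exact congrArg Subtype.val hg
  rw [h_set, Submodule.span_eq, ← (Submodule.equivMapOfInjective T hT _).finrank_eq,
    finrank_ker_downLevel (by simp; omega)]
  simp

/-- The `l`-th symmetric Hoeffding space, i.e. the subspace of functions on
`m`-subsets of the form `f(k) = ∑_{i ⊆ k, |i| = l} φ(i)` with `φ` completely
degenerate of order `l`, has dimension `C(n,l) - C(n,l-1)`, the dimension of the
Specht module `S^{(n-l,l)}`. -/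
theorem hoeffding_space_dim (n m l : ℕ) (hn : 2 ≤ n) (hl : 1 ≤ l) (hlm : l ≤ m)
    (hm : 2 * m ≤ n) :
    Module.finrank ℂ
        (Submodule.span ℂ
          {f : VSet n m → ℂ | ∃ φ : Finset (Fin n) → ℂ, degenKer n l φ ∧
            ∀ k : VSet n m, f k = ∑ i ∈ k.1.powersetCard l, φ i})
      = Nat.choose n l - Nat.choose n (l - 1) :=
  hoeffding_space_dim_general n m l hl hlm hm
end
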